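/- Let μ ∈ (1,2), n ≥ 1 and b ∈ L_n, and let λ denote Lebesgue measure. Then μ^n · λ({x ∈ [0,1) : γ^n(x) = b}) = |T(b)|, where |T(b)| denotes the length of the interval T(b). -/

import Mathlib

open Set MeasureTheory

/-- The tent map `f(x) = μx` for `x ≤ 1/2` and `μ(1-x)` for `x ≥ 1/2`. -/
noncomputable def tentMap (μ : ℝ) (x : ℝ) : ℝ :=
  if x ≤ 1/2 then μ * x else μ * (1 - x)

/-- `tentBit μ x k` is the `(k+1)`-st bit `b_{k+1}` of the tent code of `x`. -/
noncomputable def tentBit (μ x : ℝ) : ℕ → Bool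
  | 0 => if 1/2 ≤ x then true else false
  | k + 1 =>
    if (tentMap μ)^[k+1] x < 1/2 then tentBit μ x k
    else if 1/2 < (tentMap μ)^[k+1] x then !(tentBit μ x k)
    else true

/-- The tent code `γ^n(x) = b_1 ⋯ b_n`. -/
noncomputable def tentCode (μ : ℝ) (n : ℕ) (x : ℝ) : List Bool :=
  (List.range n).map (tentBit μ x)

/-- The tent language `L_n = {γ^n(x) : x ∈ [0,1)}`. -/
def tentLang (μ : ℝ) (n : ℕ) : Set (List Bool) :=
  {w | ∃ x ∈ Set.Ico (0:ℝ) 1, tentCode μ n x = w}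

/-- The segment-type `T(w) = {f^n(x) : x ∈ [0,1), γ^n(x) = w}`. -/
def segType (μ : ℝ) (n : ℕ) (w : List Bool) : Set ℝ :=
  {y | ∃ x ∈ Set.Ico (0:ℝ) 1, tentCode μ n x = w ∧ (tentMap μ)^[n] x = y}

/-- The set of segment-types `𝒯_n = {T(w) : w ∈ L_n}`. -/
def typeSet (μ : ℝ) (n : ℕ) : Set (Set ℝ) :=
  {S | ∃ w ∈ tentLang μ n, segType μ n w = S}

/-- `I_i = T(γ^i(1/2))`. -/
noncomputable def Iseg (μ : ℝ) (i : ℕ) : Set ℝ :=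
  segType μ i (tentCode μ i (1/2))

/-- `Ī_i = T(c̄_i)` where `c̄_i` is the bitwise complement of `γ^i(1/2)`. -/
noncomputable def Isegbar (μ : ℝ) (i : ℕ) : Set ℝ :=
  segType μ i ((tentCode μ i (1/2)).map (fun b => !b))

/-- The length of the interval `T(w)` (zero if `T(w)` is empty). -/
noncomputable def segLen (μ : ℝ) (n : ℕ) (w : List Bool) : ℝ :=
  (MeasureTheory.volume (segType μ n w)).toReal

/-!
Whether `f` acts on `f^i(x)` by its increasing or its decreasing branch is read off from whether
the code bit flips at step `i + 1`. So on the cylinder `{x | γ^n(x) = w}` the iterate `f^n` is one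
affine map of slope `±μ^n`, `T(w)` is the image of the cylinder under it, and Lebesgue measure
scales by `μ^n`.
-/

open Pointwise

theorem Real.volume_image_affine (a c : ℝ) (s : Set ℝ) :
    volume ((fun x => a * x + c) '' s) = ENNReal.ofReal |a| * volume s := by
  have : (fun x => a * x + c) '' s = (fun y => y + c) '' (a • s) := by
    rw [← Set.image_smul, Set.image_image]
    rfl
  rw [this, Set.image_add_right, measure_preimage_add_right, Measure.addHaar_smul,
    Module.finrank_self, pow_one]

lemma tentCode_succ (μ : ℝ) (n : ℕ) (x : ℝ) :
    tentCode μ (n + 1) x = tentCode μ n x ++ [tentBit μ x n] := by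
  simp [tentCode, List.range_succ]

-- `getLastD false` on the empty code makes `b_1` follow the same rule as the later bits.
lemma tentBit_eq (μ x : ℝ) (n : ℕ) :
    tentBit μ x n =
      if (tentMap μ)^[n] x < 1/2 then (tentCode μ n x).getLastD false
      else if 1/2 < (tentMap μ)^[n] x then !(tentCode μ n x).getLastD false
      else true := by
  cases n with
  | zero =>
    simp only [tentBit, tentCode, List.range_zero, List.map_nil, List.getLastD_nil,
      Function.iterate_zero_apply]
    split_ifs <;> first | rfl | linarith
  | succ k => simp [tentBit, tentCode_succ]

lemma tentMap_iterate_succ (μ x : ℝ) (n : ℕ) :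
    (tentMap μ)^[n + 1] x =
      if tentBit μ x n = (tentCode μ n x).getLastD false then μ * (tentMap μ)^[n] x
      else μ * (1 - (tentMap μ)^[n] x) := by
  rw [Function.iterate_succ_apply', tentBit_eq]
  generalize (tentMap μ)^[n] x = y
  rcases lt_trichotomy y (1/2) with h | rfl | h
  · rw [if_pos h, if_pos rfl, tentMap, if_pos h.le]
  · cases (tentCode μ n x).getLastD false <;> norm_num [tentMap]
  · rw [if_neg h.not_gt, if_pos h, tentMap, if_neg h.not_ge]
    cases (tentCode μ n x).getLastD false <;> rfl

lemma exists_tentMap_iterate_eq_affine (μ : ℝ) (n : ℕ) :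
    ∃ a c : List Bool → ℝ, (∀ w, |a w| = |μ| ^ n) ∧
      ∀ x, (tentMap μ)^[n] x = a (tentCode μ n x) * x + c (tentCode μ n x) := by
  induction n with
  | zero => exact ⟨fun _ => 1, fun _ => 0, by simp, by simp⟩
  | succ n ih =>
    obtain ⟨a, c, ha, hac⟩ := ih
    let sameBranch (w : List Bool) : Prop := w.getLastD false = w.dropLast.getLastD false
    refine ⟨fun w => if sameBranch w then μ * a w.dropLast else -(μ * a w.dropLast),
      fun w => if sameBranch w then μ * c w.dropLast else μ - μ * c w.dropLast, ?_, ?_⟩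
    · intro w
      dsimp only
      split_ifs <;> simp [abs_mul, ha, pow_succ, mul_comm]
    · intro x
      rw [tentMap_iterate_succ, hac x]
      simp only [sameBranch, tentCode_succ, List.dropLast_concat, List.getLastD_concat]
      split_ifs <;> ring

theorem tent_measure_preserving_general (μ : ℝ) (hμ1 : 1 < μ)
    (n : ℕ) (w : List Bool) :
    μ ^ n * (volume {x ∈ Set.Ico (0:ℝ) 1 | tentCode μ n x = w}).toReal =
      segLen μ n w := by
  obtain ⟨a, c, ha, hac⟩ := exists_tentMap_iterate_eq_affine μ n
  set A := {x ∈ Set.Ico (0:ℝ) 1 | tentCode μ n x = w}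
  have himage : segType μ n w = (fun x => a w * x + c w) '' A := by
    ext y
    constructor
    · rintro ⟨x, hx, hxw, rfl⟩
      exact ⟨x, ⟨hx, hxw⟩, by rw [hac, hxw]⟩
    · rintro ⟨x, ⟨hx, hxw⟩, rfl⟩
      exact ⟨x, hx, hxw, by rw [hac, hxw]⟩
  have hslope : |a w| = μ ^ n := by rw [ha, abs_of_pos (by linarith)]
  rw [segLen, himage, Real.volume_image_affine, hslope, ENNReal.toReal_mul,
    ENNReal.toReal_ofReal (by positivity)]

/-- `μ^n · λ({x ∈ [0,1) : γ^n(x) = b}) = |T(b)|`. -/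
theorem tent_measure_preserving (μ : ℝ) (hμ1 : 1 < μ) (hμ2 : μ < 2)
    (n : ℕ) (hn : 1 ≤ n) (w : List Bool) (hw : w ∈ tentLang μ n) :
    μ ^ n * (volume {x ∈ Set.Ico (0:ℝ) 1 | tentCode μ n x = w}).toReal =
      segLen μ n w :=
  tent_measure_preserving_general μ hμ1 n w
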